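/- arXiv:1907.05666 — 2 statements merged into one kernel-verified Lean document; each statement's English description precedes it below -/
import Mathlib

section
/- Let f : ℝ → ℝ be a strictly decreasing, convex, differentiable function with lim_{x→+∞} f(x) < 0, and let {L_k}_{k≥1} be a sequence of strictly decreasing, convex, differentiable functions on ℝ such that L_k(x) ≤ L_{k+1}(x) ≤ f(x) for all k ≥ 1 and all x ∈ ℝ, and lim_{k→∞} L_k(x) = f(x) for every x ∈ ℝ. Then for any initial point x₁ ∈ ℝ, the sequence defined by x_{k+1} = x_k − L_k(x_k)/L_k′(x_k) satisfies L₁(x₂) ≥ 0, is monotonically nondecreasing from index 2 onward, stays bounded above by the unique zero x* of f, and converges to x*. -/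
open Filter Topology

lemma tangent_le_aux {g : ℝ → ℝ} (hg : ConvexOn ℝ Set.univ g) (hd : Differentiable ℝ g)
    (a b : ℝ) : g a + deriv g a * (b - a) ≤ g b := by
  rcases lt_trichotomy a b with h | rfl | h
  · have h1 := hg.deriv_le_slope (Set.mem_univ a) (Set.mem_univ b) h (hd a)
    rw [slope_def_field] at h1
    have hba : 0 < b - a := sub_pos.2 h
    rw [le_div_iff₀ hba] at h1
    linarith
  · simp
  · have h1 := hg.slope_le_deriv (Set.mem_univ b) (Set.mem_univ a) h (hd a)
    rw [slope_def_field] at h1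
    have hab : 0 < a - b := sub_pos.2 h
    rw [div_le_iff₀ hab] at h1
    linarith

/-- Modified Newton method on ℝ: with functions defined on the whole real line,
the sign assumption on the initial point can be dropped; the sequence is
nondecreasing from index 2 onward and converges to the unique zero of `f`. -/
theorem modified_newton_real
    (f : ℝ → ℝ) (L : ℕ → ℝ → ℝ) (x : ℕ → ℝ) (c xs : ℝ)
    (hf_anti : StrictAnti f)
    (hf_conv : ConvexOn ℝ Set.univ f)
    (hf_diff : Differentiable ℝ f)
    (hc : c < 0) (hf_lim : Tendsto f atTop (𝓝 c))
    (hL_anti : ∀ k ≥ 1, StrictAnti (L k))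
    (hL_conv : ∀ k ≥ 1, ConvexOn ℝ Set.univ (L k))
    (hL_diff : ∀ k ≥ 1, Differentiable ℝ (L k))
    (hL_mono : ∀ k ≥ 1, ∀ y : ℝ, L k y ≤ L (k+1) y)
    (hL_le : ∀ k ≥ 1, ∀ y : ℝ, L k y ≤ f y)
    (hL_limk : ∀ y : ℝ, Tendsto (fun k => L k y) atTop (𝓝 (f y)))
    (hxs : f xs = 0)
    (hrec : ∀ k ≥ 1, x (k+1) = x k - L k (x k) / deriv (L k) (x k)) :
    (∀ y : ℝ, f y = 0 → y = xs) ∧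
    0 ≤ L 1 (x 2) ∧
    (∀ k ≥ 2, x k ≤ x (k+1)) ∧
    (∀ k ≥ 2, x k ≤ xs) ∧
    Tendsto x atTop (𝓝 xs) := by
  -- derivative of L k is everywhere negative
  have hdneg : ∀ k ≥ 1, ∀ z : ℝ, deriv (L k) z < 0 := by
    intro k hk z
    have h1 := (hL_conv k hk).deriv_le_slope (Set.mem_univ z) (Set.mem_univ (z+1))
      (by linarith) ((hL_diff k hk) z)
    rw [slope_def_field] at h1
    have h2 : L k (z+1) < L k z := (hL_anti k hk) (by linarith)
    have : (L k (z+1) - L k z) / (z + 1 - z) < 0 := by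
      apply div_neg_of_neg_of_pos <;> linarith
    linarith
  have htan : ∀ k ≥ 1, ∀ a b : ℝ, L k a + deriv (L k) a * (b - a) ≤ L k b :=
    fun k hk => tangent_le_aux (hL_conv k hk) (hL_diff k hk)
  -- uniqueness of zero
  have huniq : ∀ y : ℝ, f y = 0 → y = xs := fun y hy =>
    hf_anti.injective (hy.trans hxs.symm)
  -- key: L k (x (k+1)) ≥ 0 for k ≥ 1
  have key : ∀ k ≥ 1, 0 ≤ L k (x (k+1)) := by
    intro k hk
    have hd := hdneg k hk (x k)
    have heq : L k (x k) + deriv (L k) (x k) * (x (k+1) - x k) = 0 := by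
      have hd' : deriv (L k) (x k) ≠ 0 := hd.ne
      rw [hrec k hk]; field_simp; ring
    linarith [htan k hk (x k) (x (k+1))]
  -- pointwise monotonicity of L in k
  have hchain : ∀ k, 1 ≤ k → ∀ m, k ≤ m → ∀ y : ℝ, L k y ≤ L m y := by
    intro k hk m hm
    induction m, hm using Nat.le_induction with
    | base => intro y; rfl
    | succ m hm ih => intro y; exact (ih y).trans (hL_mono m (by omega) y)
  have hnonneg : ∀ k ≥ 2, 0 ≤ L k (x k) := by
    intro k hk
    obtain ⟨j, rfl⟩ : ∃ j, k = j + 1 := ⟨k - 1, by omega⟩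
    exact le_trans (key j (by omega)) (hchain j (by omega) (j+1) (by omega) _)
  have hmono : ∀ k ≥ 2, x k ≤ x (k+1) := by
    intro k hk
    rw [hrec k (by omega)]
    have hd := hdneg k (by omega) (x k)
    have h0 := hnonneg k hk
    have : L k (x k) / deriv (L k) (x k) ≤ 0 :=
      div_nonpos_of_nonneg_of_nonpos h0 hd.le
    linarith
  have hmono2 : ∀ k ≥ 2, ∀ m, k ≤ m → x k ≤ x m := by
    intro k hk m hm
    induction m, hm using Nat.le_induction with
    | base => rfl
    | succ m hm ih => exact ih.trans (hmono m (by omega))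
  have hle : ∀ k ≥ 2, x k ≤ xs := by
    intro k hk
    by_contra h
    push_neg at h
    have h1 : f (x k) < f xs := hf_anti h
    have h2 := hL_le k (by omega) (x k)
    linarith [hnonneg k hk]
  refine ⟨huniq, key 1 le_rfl, hmono, hle, ?_⟩
  -- convergence
  set y : ℕ → ℝ := fun n => x (n + 2) with hy
  have hymono : Monotone y := monotone_nat_of_le_succ fun n => hmono (n+2) (by omega)
  have hybdd : BddAbove (Set.range y) := ⟨xs, by rintro _ ⟨n, rfl⟩; exact hle (n+2) (by omega)⟩
  set l : ℝ := ⨆ n, y n with hl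
  have hyl : Tendsto y atTop (𝓝 l) := tendsto_atTop_ciSup hymono hybdd
  have hyle : ∀ n, y n ≤ l := fun n => le_ciSup hybdd n
  have hlle : l ≤ xs := ciSup_le fun n => hle (n+2) (by omega)
  have hlxs : l = xs := by
    by_contra hne
    have hllt : l < xs := lt_of_le_of_ne hlle hne
    have hfl : 0 < f l := by rw [← hxs]; exact hf_anti hllt
    -- find K with L K l > 0
    obtain ⟨K, hK⟩ := (((hL_limk l).eventually (eventually_gt_nhds hfl)).and
      (eventually_ge_atTop 1)).exists
    obtain ⟨hKpos, hK1⟩ := hK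
    set ε : ℝ := L K l with hε
    -- bound on derivative
    set a : ℝ := x 2 - 1 with ha
    have hfa : 0 < f a := by
      rw [← hxs]
      exact hf_anti (by have := hle 2 le_rfl; simp only [ha]; linarith)
    set M : ℝ := f a with hM
    have hstep : ∀ k, max K 2 ≤ k → x k + ε / M ≤ x (k + 1) := by
      intro k hk
      have hk1 : (1:ℕ) ≤ k := le_trans (by omega) hk
      have hk2 : (2:ℕ) ≤ k := le_trans (le_max_right K 2) hk
      have hxk2 : x 2 ≤ x k := hmono2 2 le_rfl k hk2
      have hxkl : x k ≤ l := hyle (k - 2) |>.trans_eq' (by simp [hy]; congr 1; omega)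
      have hLkl : ε ≤ L k (x k) := by
        calc ε = L K l := rfl
        _ ≤ L k l := hchain K hK1 k (le_trans (le_max_left K 2) hk) l
        _ ≤ L k (x k) := (hL_anti k hk1).antitone hxkl
      have hd := hdneg k hk1 (x k)
      -- derivative lower bound: deriv ≥ -M
      have hdM : -M ≤ deriv (L k) (x k) := by
        have ht := htan k hk1 (x k) a
        have hLa : L k a ≤ f a := hL_le k hk1 a
        have h0 : 0 ≤ L k (x k) := hnonneg k hk2
        have hs : 1 ≤ x k - a := by simp only [ha]; linarith
        nlinarith [htan k hk1 (x k) a]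
      have hεpos : 0 < ε := hKpos
      have hdiv : ε / M ≤ L k (x k) / (-(deriv (L k) (x k))) := by
        apply div_le_div₀ (le_trans hεpos.le hLkl) hLkl (by linarith) (by linarith)
      rw [hrec k hk1]
      have : L k (x k) / deriv (L k) (x k) = -(L k (x k) / (-(deriv (L k) (x k)))) := by
        field_simp
      rw [this]
      linarith
    -- iterate to contradiction
    have hiter : ∀ n : ℕ, x (max K 2) + n * (ε / M) ≤ x (max K 2 + n) := by
      intro n
      induction n with
      | zero => simp
      | succ n ih =>
        have := hstep (max K 2 + n) (by omega)
        push_cast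
        calc x (max K 2) + (n + 1) * (ε / M) = x (max K 2) + n * (ε/M) + ε/M := by ring
        _ ≤ x (max K 2 + n) + ε / M := by linarith
        _ ≤ x (max K 2 + n + 1) := this
    have hεpos : 0 < ε := hKpos
    have hεM : 0 < ε / M := div_pos hεpos hfa
    obtain ⟨n, hn⟩ := exists_nat_gt ((xs - x (max K 2)) / (ε / M))
    have h1 : xs - x (max K 2) < n * (ε / M) := by
      rw [div_lt_iff₀ hεM] at hn; linarith
    have h2 := hiter n
    have h3 := hle (max K 2 + n) (by omega)
    linarith
  rw [← hlxs]
  have := (tendsto_add_atTop_iff_nat 2).mp hyl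
  exact this
end

section
/- Let M be a real symmetric positive semidefinite m×m matrix, b ∈ ℝᵐ, and ε > 0 such that ‖Pb‖² < ε² < ‖b‖², where P denotes the orthogonal projection of ℝᵐ onto the kernel of M. Then there exists a unique α* ∈ (0,∞) satisfying (α*)² bᵀ(M + α*I)⁻²b = ε². -/
/-! Diagonalising `M = U diag(d) Uᵀ` with `d ≥ 0` and writing `c = Uᵀ b`, the left-hand side is
`∑ i, cᵢ² (α / (dᵢ + α))²`. The columns of `U` with `dᵢ = 0` span the kernel of `M`, so their
indices together contribute exactly `‖Pb‖²`, whatever `α > 0` is. Every other term increases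
strictly and continuously from `0` at `α = 0` to `cᵢ²` as `α → ∞`, and these limits add up to
`‖b‖² - ‖Pb‖²`; the intermediate value theorem then gives exactly one root. -/

open Matrix Finset Filter Topology Set

theorem existsUnique_gt_eq_of_strictMonoOn {α δ : Type*} [ConditionallyCompleteLinearOrder α]
    [TopologicalSpace α] [OrderTopology α] [DenselyOrdered α]
    [LinearOrder δ] [TopologicalSpace δ] [OrderClosedTopology δ] {f : α → δ} {a : α} {y L : δ}
    (hf : ContinuousOn f (Ici a)) (hmono : StrictMonoOn f (Ici a))
    (hlim : Tendsto f atTop (𝓝 L)) (hay : f a < y) (hyL : y < L) :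
    ∃! x, a < x ∧ f x = y := by
  obtain ⟨b, hyb, hab⟩ :=
    ((hlim.eventually (eventually_gt_nhds hyL)).and (eventually_ge_atTop a)).exists
  obtain ⟨x, ⟨hax, -⟩, hfx⟩ :=
    intermediate_value_Ioo hab (hf.mono Icc_subset_Ici_self) ⟨hay, hyb⟩
  refine ⟨x, ⟨hax, hfx⟩, fun x' ⟨hax', hfx'⟩ => ?_⟩
  exact hmono.injOn (mem_Ici.mpr hax'.le) (mem_Ici.mpr hax.le) (hfx'.trans hfx.symm)

theorem strictMonoOn_div_const_add_self {l : ℝ} (hl : 0 < l) :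
    StrictMonoOn (fun x => x / (l + x)) (Ici 0) := by
  intro x (hx : 0 ≤ x) y _ hxy
  show x / (l + x) < y / (l + y)
  rw [div_lt_div_iff₀ (by linarith) (by linarith)]
  nlinarith

theorem tendsto_div_const_add_self_atTop (l : ℝ) :
    Tendsto (fun x => x / (l + x)) atTop (𝓝 1) := by
  have h : Tendsto (fun x => 1 - l / (l + x)) atTop (𝓝 (1 - 0)) :=
    tendsto_const_nhds.sub <|
      tendsto_const_nhds.div_atTop (tendsto_atTop_add_const_left _ _ tendsto_id)
  rw [sub_zero] at h
  refine h.congr' ?_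
  filter_upwards [eventually_gt_atTop (-l)] with x hx
  have : l + x ≠ 0 := by linarith
  field_simp
  ring

theorem existsUnique_pos_sum_mul_div_add_sq_eq {ι : Type*} {s : Finset ι} {w l : ι → ℝ}
    (hw : ∀ i ∈ s, 0 ≤ w i) (hl : ∀ i ∈ s, 0 < l i) {y : ℝ} (hy : 0 < y)
    (hyw : y < ∑ i ∈ s, w i) :
    ∃! α, 0 < α ∧ ∑ i ∈ s, w i * (α / (l i + α)) ^ 2 = y := by
  have hterm : ∀ i ∈ s, StrictMonoOn (fun α => (α / (l i + α)) ^ 2) (Ici 0) := fun i hi =>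
    (pow_left_strictMonoOn₀ two_ne_zero).comp (strictMonoOn_div_const_add_self (hl i hi))
      fun x hx => div_nonneg hx (add_nonneg (hl i hi).le hx)
  obtain ⟨j, hj, hwj⟩ : ∃ j ∈ s, 0 < w j := by
    have h0w : ∑ i ∈ s, (0 : ℝ) < ∑ i ∈ s, w i := hyw.trans_le' (by simpa using hy.le)
    simpa using exists_lt_of_sum_lt h0w
  refine existsUnique_gt_eq_of_strictMonoOn ?_ ?_ ?_ (by simpa using hy) hyw
  · refine continuousOn_finsetSum _ fun i hi => ?_
    refine continuousOn_const.mul <| (continuousOn_id.div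
      (continuousOn_const.add continuousOn_id)
      fun x (hx : 0 ≤ x) => (add_pos_of_pos_of_nonneg (hl i hi) hx).ne').pow 2
  · intro x hx z hz hxz
    refine sum_lt_sum (fun i hi => ?_)
      ⟨j, hj, mul_lt_mul_of_pos_left (hterm j hj hx hz hxz) hwj⟩
    exact mul_le_mul_of_nonneg_left ((hterm i hi).monotoneOn hx hz hxz.le) (hw i hi)
  · simpa using tendsto_finsetSum s fun i _ =>
      ((tendsto_div_const_add_self_atTop (l i)).pow 2).const_mul (w i)

namespace Matrix

variable {n : Type*} [Fintype n] [DecidableEq n] {U : Matrix n n ℝ} {d : n → ℝ}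

theorem PosSemidef.exists_orthogonal_diagonalization {A : Matrix n n ℝ} (hA : A.PosSemidef) :
    ∃ (U : Matrix n n ℝ) (d : n → ℝ),
      Uᵀ * U = 1 ∧ A = U * diagonal d * Uᵀ ∧ ∀ i, 0 ≤ d i := by
  have hstar : star (hA.1.eigenvectorUnitary : Matrix n n ℝ) = (hA.1.eigenvectorUnitary)ᵀ :=
    conjTranspose_eq_transpose_of_trivial _
  refine ⟨hA.1.eigenvectorUnitary, hA.1.eigenvalues, ?_, ?_, hA.eigenvalues_nonneg⟩
  · rw [← hstar, Unitary.coe_star_mul_self]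
  · conv_lhs => rw [hA.1.spectral_theorem]
    simp [hstar]

theorem dotProduct_mul_diagonal_mul_transpose_mulVec (U : Matrix n n ℝ) (g x : n → ℝ) :
    x ⬝ᵥ ((U * diagonal g * Uᵀ) *ᵥ x) = ∑ i, g i * (Uᵀ *ᵥ x) i ^ 2 := by
  rw [← mulVec_mulVec, ← mulVec_mulVec, dotProduct_mulVec, ← mulVec_transpose]
  simp only [dotProduct, mulVec_diagonal]
  exact sum_congr rfl fun i _ => by ring

theorem sum_sq_transpose_mulVec (hU : Uᵀ * U = 1) (x : n → ℝ) :
    ∑ i, (Uᵀ *ᵥ x) i ^ 2 = ∑ i, x i ^ 2 := by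
  have h := dotProduct_mul_diagonal_mul_transpose_mulVec U (fun _ => 1) x
  rw [diagonal_one, mul_one, mul_eq_one_comm.mp hU, one_mulVec] at h
  simpa [dotProduct, sq] using h.symm

theorem mul_diagonal_mul_transpose_mul (hU : Uᵀ * U = 1) (g h : n → ℝ) :
    (U * diagonal g * Uᵀ) * (U * diagonal h * Uᵀ) = U * diagonal (g * h) * Uᵀ := by
  calc (U * diagonal g * Uᵀ) * (U * diagonal h * Uᵀ)
      = U * diagonal g * (Uᵀ * U) * diagonal h * Uᵀ := by simp only [mul_assoc]
    _ = U * diagonal (g * h) * Uᵀ := by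
      rw [hU, mul_one, mul_assoc U, diagonal_mul_diagonal]; rfl

theorem mul_diagonal_mul_transpose_add_smul_one (hU : Uᵀ * U = 1) (α : ℝ) :
    U * diagonal d * Uᵀ + α • 1 = U * diagonal (fun i => d i + α) * Uᵀ := by
  rw [← diagonal_add, mul_add, add_mul, ← smul_one_eq_diagonal, mul_smul_comm, mul_one,
    smul_mul_assoc, mul_eq_one_comm.mp hU]

theorem inv_mul_diagonal_mul_transpose_add_smul_one (hU : Uᵀ * U = 1) {α : ℝ}
    (hα : ∀ i, d i + α ≠ 0) :
    (U * diagonal d * Uᵀ + α • 1)⁻¹ = U * diagonal (fun i => (d i + α)⁻¹) * Uᵀ := by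
  refine inv_eq_left_inv ?_
  rw [mul_diagonal_mul_transpose_add_smul_one hU, mul_diagonal_mul_transpose_mul hU]
  have : ((fun i => (d i + α)⁻¹) * fun i => d i + α) = fun _ => 1 :=
    funext fun i => inv_mul_cancel₀ (hα i)
  rw [this, diagonal_one, mul_one, mul_eq_one_comm.mp hU]

theorem sq_mul_dotProduct_inv_mul_inv_mulVec (hU : Uᵀ * U = 1) {α : ℝ}
    (hα : ∀ i, d i + α ≠ 0) (b : n → ℝ) :
    α ^ 2 * (b ⬝ᵥ (((U * diagonal d * Uᵀ + α • 1)⁻¹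
      * (U * diagonal d * Uᵀ + α • 1)⁻¹) *ᵥ b))
        = ∑ i, (Uᵀ *ᵥ b) i ^ 2 * (α / (d i + α)) ^ 2 := by
  rw [inv_mul_diagonal_mul_transpose_add_smul_one hU hα, mul_diagonal_mul_transpose_mul hU,
    dotProduct_mul_diagonal_mul_transpose_mulVec, mul_sum]
  refine sum_congr rfl fun i _ => ?_
  simp only [Pi.mul_apply]
  field_simp [hα i]

theorem transpose_mulVec_mul_diagonal_mul_transpose_mulVec (hU : Uᵀ * U = 1) (v : n → ℝ) :
    Uᵀ *ᵥ ((U * diagonal d * Uᵀ) *ᵥ v) = diagonal d *ᵥ (Uᵀ *ᵥ v) := by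
  rw [mulVec_mulVec, mulVec_mulVec, ← mul_assoc, ← mul_assoc, hU, one_mul]

theorem mul_diagonal_mul_transpose_mulVec_col (hU : Uᵀ * U = 1) (j : n) :
    (U * diagonal d * Uᵀ) *ᵥ (U *ᵥ Pi.single j 1) = d j • (U *ᵥ Pi.single j 1) := by
  rw [mulVec_mulVec, mul_assoc, hU, mul_one, ← mulVec_mulVec, diagonal_mulVec_single, mul_one,
    ← mulVec_smul, ← Pi.single_smul', smul_eq_mul, mul_one]

theorem transpose_mulVec_eq_ite_of_mem_ker (hU : Uᵀ * U = 1) {b p : n → ℝ}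
    (hp_ker : (U * diagonal d * Uᵀ) *ᵥ p = 0)
    (hp_orth : ∀ q, (U * diagonal d * Uᵀ) *ᵥ q = 0 → (b - p) ⬝ᵥ q = 0) (i : n) :
    (Uᵀ *ᵥ p) i = if d i = 0 then (Uᵀ *ᵥ b) i else 0 := by
  split_ifs with hd
  · have hcol := hp_orth _ (by rw [mul_diagonal_mul_transpose_mulVec_col hU, hd, zero_smul])
    rw [dotProduct_mulVec, ← mulVec_transpose, dotProduct_single, mul_one, mulVec_sub] at hcol
    exact (sub_eq_zero.mp hcol).symm
  · have h := congrFun (transpose_mulVec_mul_diagonal_mul_transpose_mulVec (d := d) hU p) i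
    rw [hp_ker, mulVec_zero, mulVec_diagonal] at h
    exact (mul_eq_zero.mp h.symm).resolve_left hd

theorem sum_sq_eq_sum_filter_of_mem_ker (hU : Uᵀ * U = 1) {b p : n → ℝ}
    (hp_ker : (U * diagonal d * Uᵀ) *ᵥ p = 0)
    (hp_orth : ∀ q, (U * diagonal d * Uᵀ) *ᵥ q = 0 → (b - p) ⬝ᵥ q = 0) :
    ∑ i, p i ^ 2 = ∑ i with d i = 0, (Uᵀ *ᵥ b) i ^ 2 := by
  simp only [← sum_sq_transpose_mulVec hU p, transpose_mulVec_eq_ite_of_mem_ker hU hp_ker hp_orth,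
    ite_pow, sum_ite]
  simp

theorem sq_mul_dotProduct_inv_mul_inv_mulVec_of_mem_ker (hU : Uᵀ * U = 1) (hd : ∀ i, 0 ≤ d i)
    {b p : n → ℝ} (hp_ker : (U * diagonal d * Uᵀ) *ᵥ p = 0)
    (hp_orth : ∀ q, (U * diagonal d * Uᵀ) *ᵥ q = 0 → (b - p) ⬝ᵥ q = 0) {α : ℝ} (hα : 0 < α) :
    α ^ 2 * (b ⬝ᵥ (((U * diagonal d * Uᵀ + α • 1)⁻¹
      * (U * diagonal d * Uᵀ + α • 1)⁻¹) *ᵥ b))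
        = ∑ i, p i ^ 2 + ∑ i with d i ≠ 0, (Uᵀ *ᵥ b) i ^ 2 * (α / (d i + α)) ^ 2 := by
  rw [sq_mul_dotProduct_inv_mul_inv_mulVec hU fun i => (add_pos_of_nonneg_of_pos (hd i) hα).ne',
    sum_sq_eq_sum_filter_of_mem_ker hU hp_ker hp_orth,
    ← sum_filter_add_sum_filter_not univ (fun i => d i = 0)]
  congr 1
  refine sum_congr rfl fun i hi => ?_
  rw [(mem_filter.mp hi).2, zero_add, div_self hα.ne', one_pow, mul_one]

end Matrix

theorem discrepancy_principle_unique_root_general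
    (m : ℕ) (M : Matrix (Fin m) (Fin m) ℝ) (b p : Fin m → ℝ) (ε : ℝ)
    (hM : M.PosSemidef)
    (hp_ker : M *ᵥ p = 0)
    (hp_orth : ∀ q : Fin m → ℝ, M *ᵥ q = 0 → (b - p) ⬝ᵥ q = 0)
    (h_lo : ∑ i, p i ^ 2 < ε ^ 2) (h_hi : ε ^ 2 < ∑ i, b i ^ 2) :
    ∃! α : ℝ, 0 < α ∧
      α ^ 2 *
        (b ⬝ᵥ (((M + α • (1 : Matrix (Fin m) (Fin m) ℝ))⁻¹
          * (M + α • (1 : Matrix (Fin m) (Fin m) ℝ))⁻¹) *ᵥ b)) = ε ^ 2 := by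
  obtain ⟨U, d, hU, rfl, hd⟩ := hM.exists_orthogonal_diagonalization
  have hb : ∑ i, b i ^ 2 = ∑ i, p i ^ 2 + ∑ i with d i ≠ 0, (Uᵀ *ᵥ b) i ^ 2 := by
    rw [← sum_sq_transpose_mulVec hU b, sum_sq_eq_sum_filter_of_mem_ker hU hp_ker hp_orth,
      sum_filter_add_sum_filter_not]
  obtain ⟨α, ⟨hα, hαeq⟩, huniq⟩ := existsUnique_pos_sum_mul_div_add_sq_eq
    (s := {i | d i ≠ 0}) (w := fun i => (Uᵀ *ᵥ b) i ^ 2) (fun i _ => sq_nonneg _)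
    (fun i hi => (hd i).lt_of_ne' (mem_filter.mp hi).2) (sub_pos.mpr h_lo)
    (by linarith : ε ^ 2 - ∑ i, p i ^ 2 < _)
  have hφ := fun β (hβ : 0 < β) =>
    sq_mul_dotProduct_inv_mul_inv_mulVec_of_mem_ker (b := b) hU hd hp_ker hp_orth hβ
  refine ⟨α, ⟨hα, by rw [hφ α hα]; linarith⟩, fun β ⟨hβ, hβeq⟩ => huniq β ⟨hβ, ?_⟩⟩
  rw [hφ β hβ] at hβeq
  linarith

/-- Existence and uniqueness of the discrepancy-principle parameter: if
`‖Pb‖² < ε² < ‖b‖²` (with `p = Pb` the orthogonal projection of `b` onto the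
kernel of `M`), then there is a unique `α* > 0` with
`(α*)² bᵀ(M + α*I)⁻²b = ε²`. -/
theorem discrepancy_principle_unique_root
    (m : ℕ) (M : Matrix (Fin m) (Fin m) ℝ) (b p : Fin m → ℝ) (ε : ℝ)
    (hM : M.PosSemidef) (hε : 0 < ε)
    (hp_ker : M *ᵥ p = 0)
    (hp_orth : ∀ q : Fin m → ℝ, M *ᵥ q = 0 → (b - p) ⬝ᵥ q = 0)
    (h_lo : ∑ i, p i ^ 2 < ε ^ 2) (h_hi : ε ^ 2 < ∑ i, b i ^ 2) :
    ∃! α : ℝ, 0 < α ∧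
      α ^ 2 *
        (b ⬝ᵥ (((M + α • (1 : Matrix (Fin m) (Fin m) ℝ))⁻¹
          * (M + α • (1 : Matrix (Fin m) (Fin m) ℝ))⁻¹) *ᵥ b)) = ε ^ 2 :=
  discrepancy_principle_unique_root_general m M b p ε hM hp_ker hp_orth h_lo h_hi
end
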